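/- arXiv:2407.10680 — 5 statements merged into one kernel-verified Lean document; each statement's English description precedes it below -/
import Mathlib

section
/- For any signed graph on n vertices, any internal opinion vector s ∈ ℝ^n, and any initial vector z(0) ∈ ℝ^n, the Friedkin–Johnsen update z(t+1) = (I + D)^{−1}(s + A·z(t)) (equivalently, z_i(t+1) = (s_i + Σ_{j} A_{ij} z_j(t))/(1 + D_{ii}) for each i) converges as t → ∞; moreover I + L is invertible and the limit is z = (I + L)^{−1} s. -/
/-!
The update is `x ↦ (I + D)⁻¹ (s + A x)`. Row `i` of `(I + D)⁻¹ A` has absolute sum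
`dᵢ / (1 + dᵢ) < 1`, so the update is a contraction for the sup norm, and Banach's fixed point
theorem gives convergence of every orbit to the unique fixed point. Fixed points are exactly the
solutions of `(I + L) x = s`; since one exists for every `s`, `I + L` is invertible.
-/

open Matrix Filter Topology
open scoped NNReal

namespace FriedkinJohnsen

variable {ι : Type*} [Fintype ι] (A : Matrix ι ι ℝ)

def degree (i : ι) : ℝ := ∑ j, |A i j|

noncomputable def update (s x : ι → ℝ) : ι → ℝ := fun i => (s i + (A *ᵥ x) i) / (1 + degree A i)

/-- `Δ / (1 + Δ)` with `Δ = ∑ᵢ dᵢ` dominates every row rate `dᵢ / (1 + dᵢ)`, as `Δ ≥ dᵢ`. -/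
noncomputable def rate : ℝ≥0 :=
  (∑ i, ∑ j, ‖A i j‖₊) / (1 + ∑ i, ∑ j, ‖A i j‖₊)

lemma degree_nonneg (i : ι) : 0 ≤ degree A i :=
  Finset.sum_nonneg fun _ _ => abs_nonneg _

lemma rate_lt_one : rate A < 1 :=
  (div_lt_one (by positivity)).2 (lt_one_add _)

lemma degree_div_le_rate (i : ι) : degree A i / (1 + degree A i) ≤ rate A := by
  have hΔ : ((∑ i, ∑ j, ‖A i j‖₊ : ℝ≥0) : ℝ) = ∑ i, degree A i := by
    simp [degree, Real.norm_eq_abs]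
  have hle : degree A i ≤ ∑ k, degree A k :=
    Finset.single_le_sum (fun k _ => degree_nonneg A k) (Finset.mem_univ i)
  have hpos := degree_nonneg A i
  rw [rate, NNReal.coe_div, NNReal.coe_add, NNReal.coe_one, hΔ,
    div_le_div_iff₀ (by linarith) (by linarith)]
  nlinarith

lemma abs_mulVec_sub_mulVec_le (x y : ι → ℝ) (i : ι) :
    |(A *ᵥ x) i - (A *ᵥ y) i| ≤ degree A i * dist x y :=
  calc |(A *ᵥ x) i - (A *ᵥ y) i| = |∑ j, A i j * (x j - y j)| := by
        simp only [mulVec, dotProduct, ← Finset.sum_sub_distrib, mul_sub]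
    _ ≤ ∑ j, |A i j| * |x j - y j| := by
        simpa only [abs_mul] using Finset.abs_sum_le_sum_abs (fun j => A i j * (x j - y j)) Finset.univ
    _ ≤ ∑ j, |A i j| * dist x y := by
        gcongr with j
        exact dist_le_pi_dist x y j
    _ = degree A i * dist x y := (Finset.sum_mul _ _ _).symm

lemma contractingWith_update (s : ι → ℝ) : ContractingWith (rate A) (update A s) := by
  refine ⟨rate_lt_one A, LipschitzWith.of_dist_le_mul fun x y => ?_⟩
  refine (dist_pi_le_iff (by positivity)).2 fun i => ?_
  have hpos : 0 < 1 + degree A i := by linarith [degree_nonneg A i]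
  calc dist (update A s x i) (update A s y i)
      = |(A *ᵥ x) i - (A *ᵥ y) i| / (1 + degree A i) := by
        rw [update, update, Real.dist_eq, ← sub_div, abs_div, abs_of_pos hpos,
          add_sub_add_left_eq_sub]
    _ ≤ degree A i * dist x y / (1 + degree A i) := by
        gcongr
        exact abs_mulVec_sub_mulVec_le A x y i
    _ = degree A i / (1 + degree A i) * dist x y := by ring
    _ ≤ rate A * dist x y := by
        gcongr
        exact degree_div_le_rate A i

variable [DecidableEq ι]

lemma isFixedPt_update_iff (s x : ι → ℝ) :
    Function.IsFixedPt (update A s) x ↔ (1 + (diagonal (degree A) - A)) *ᵥ x = s := by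
  simp only [Function.IsFixedPt, funext_iff, update, add_mulVec, sub_mulVec, one_mulVec,
    mulVec_diagonal, Pi.add_apply, Pi.sub_apply]
  refine forall_congr' fun i => ?_
  rw [div_eq_iff (by linarith [degree_nonneg A i])]
  constructor <;> intro h <;> linarith

lemma mulVec_fixedPoint_update (s : ι → ℝ) :
    (1 + (diagonal (degree A) - A)) *ᵥ
      ContractingWith.fixedPoint (update A s) (contractingWith_update A s) = s :=
  (isFixedPt_update_iff A s _).1 (ContractingWith.fixedPoint_isFixedPt _)

lemma isUnit_one_add_diagonal_degree_sub :
    IsUnit (1 + (diagonal (degree A) - A)) :=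
  mulVec_surjective_iff_isUnit.1 fun s => ⟨_, mulVec_fixedPoint_update A s⟩

lemma tendsto_iterate_update (s x₀ : ι → ℝ) :
    Tendsto (fun t => (update A s)^[t] x₀) atTop
      (𝓝 ((1 + (diagonal (degree A) - A))⁻¹ *ᵥ s)) := by
  have hunit := (isUnit_iff_isUnit_det _).1 (isUnit_one_add_diagonal_degree_sub A)
  have hlim : (1 + (diagonal (degree A) - A))⁻¹ *ᵥ s =
      ContractingWith.fixedPoint (update A s) (contractingWith_update A s) := by
    conv_lhs => rw [← mulVec_fixedPoint_update A s]
    rw [mulVec_mulVec, nonsing_inv_mul _ hunit, one_mulVec]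
  rw [hlim]
  exact (contractingWith_update A s).tendsto_iterate_fixedPoint x₀

end FriedkinJohnsen

open FriedkinJohnsen in
theorem stmt_2_general (n : ℕ) (A : Matrix (Fin n) (Fin n) ℝ)
    (D L : Matrix (Fin n) (Fin n) ℝ)
    (hD : D = Matrix.diagonal fun i => ∑ j, |A i j|)
    (hL : L = D - A)
    (s : Fin n → ℝ) (z : ℕ → Fin n → ℝ)
    (hupd : ∀ t i, z (t + 1) i = (s i + ∑ j, A i j * z t j) / (1 + D i i)) :
    IsUnit (1 + L) ∧
    Filter.Tendsto z Filter.atTop (nhds ((1 + L)⁻¹ *ᵥ s)) := by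
  have hDL : L = diagonal (degree A) - A := by rw [hL, hD]; rfl
  have hz : ∀ t, z t = (update A s)^[t] (z 0) := by
    intro t
    induction t with
    | zero => rfl
    | succ t ih =>
      funext i
      rw [Function.iterate_succ_apply', ← ih, hupd, hD, diagonal_apply_eq]
      rfl
  rw [hDL, funext hz]
  exact ⟨isUnit_one_add_diagonal_degree_sub A, tendsto_iterate_update A s (z 0)⟩

theorem stmt_2 (n : ℕ) (hn : 1 ≤ n) (A : Matrix (Fin n) (Fin n) ℝ)
    (hAsymm : A.IsSymm) (hAdiag : ∀ i, A i i = 0)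
    (hAval : ∀ i j, A i j = -1 ∨ A i j = 0 ∨ A i j = 1)
    (D L : Matrix (Fin n) (Fin n) ℝ)
    (hD : D = Matrix.diagonal fun i => ∑ j, |A i j|)
    (hL : L = D - A)
    (s : Fin n → ℝ) (z : ℕ → Fin n → ℝ)
    (hupd : ∀ t i, z (t + 1) i = (s i + ∑ j, A i j * z t j) / (1 + D i i)) :
    IsUnit (1 + L) ∧
    Filter.Tendsto z Filter.atTop (nhds ((1 + L)⁻¹ *ᵥ s)) :=
  stmt_2_general n A D L hD hL s z hupd
end

section
/- Let X(t), Y(t) ∈ ℝ^{n×n} be defined by X(0) = I, Y(0) = O, X(t+1) = X(t)(I + D)^{−1}A⁺ − Y(t)(I + D)^{−1}A⁻, and Y(t+1) = Y(t)(I + D)^{−1}A⁺ − X(t)(I + D)^{−1}A⁻. For each pair of indices i, j, the series p_{ij} := Σ_{t=0}^{∞} X(t)_{ij}/(1 + D_{jj}) and q_{ij} := Σ_{t=0}^{∞} Y(t)_{ij}/(1 + D_{jj}) converge, with p_{ij} = (1/2)[ (I + D − A⁺ + A⁻)^{−1} + (I + L)^{−1} ]_{ij} and q_{ij} = (1/2)[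 (I + D − A⁺ + A⁻)^{−1} − (I + L)^{−1} ]_{ij}; consequently, for every internal opinion vector s ∈ [−1,1]^n the equilibrium expressed opinion satisfies z_i = Σ_{j=1}^{n} (p_{ij} − q_{ij}) s_j for every i. -/
/-! With `W = 1 + D` and `|A| = A⁺ - A⁻`, the recursion gives `X t + Y t = (W⁻¹ |A|) ^ t` and
`X t - Y t = (W⁻¹ A) ^ t`. The matrices `W - |A| = 1 + D - A⁺ + A⁻` and `W - A = 1 + L` are
strictly diagonally dominant, so their Jacobi matrices `W⁻¹ |A|` and `W⁻¹ A` have `ℓ∞` operator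
norm `< 1`, and the Neumann series `∑ (W⁻¹ M) ^ t W⁻¹` converges to `(W - M)⁻¹`. Half the sum and
half the difference of the two series are `p` and `q`, whence `p - q = (1 + L)⁻¹`. -/

open Matrix

theorem HasSum.half_add_and_half_sub {β E : Type*} [AddCommGroup E] [Module ℝ E]
    [TopologicalSpace E] [IsTopologicalAddGroup E] [ContinuousConstSMul ℝ E] {f g : β → E}
    {a b : E} (h₁ : HasSum (fun t => f t + g t) a) (h₂ : HasSum (fun t => f t - g t) b) :
    HasSum f ((1 / 2 : ℝ) • (a + b)) ∧ HasSum g ((1 / 2 : ℝ) • (a - b)) := by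
  constructor
  · convert (h₁.add h₂).const_smul (1 / 2 : ℝ) using 1
    funext t
    module
  · convert (h₁.sub h₂).const_smul (1 / 2 : ℝ) using 1
    funext t
    module

section Jacobi

variable {ι : Type*} [Fintype ι] [DecidableEq ι]

theorem inv_diagonal_of_ne_zero {w : ι → ℝ} (hw : ∀ i, w i ≠ 0) :
    (diagonal w)⁻¹ = diagonal fun i => (w i)⁻¹ :=
  inv_eq_left_inv <| by
    rw [diagonal_mul_diagonal, ← diagonal_one]
    exact congrArg diagonal (funext fun i => inv_mul_cancel₀ (hw i))

theorem HasSum.mul_inv_diagonal_apply {β : Type*} {F : β → Matrix ι ι ℝ} {S : Matrix ι ι ℝ}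
    {w : ι → ℝ} (hw : ∀ j, w j ≠ 0) (h : HasSum (fun t => F t * (diagonal w)⁻¹) S) (i j : ι) :
    HasSum (fun t => F t i j / w j) (S i j) := by
  simpa only [inv_diagonal_of_ne_zero hw, mul_diagonal, div_eq_mul_inv]
    using Pi.hasSum.1 (Pi.hasSum.1 h i) j

attribute [local instance] Matrix.linftyOpNormedRing Matrix.linftyOpNormedAlgebra

theorem linfty_opNorm_inv_diagonal_mul_lt_one {M : Matrix ι ι ℝ} {w : ι → ℝ}
    (hM : ∀ i, ∑ j, |M i j| < w i) : ‖(diagonal w)⁻¹ * M‖ < 1 := by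
  have hw (i : ι) : 0 < w i := (Finset.sum_nonneg fun j _ => abs_nonneg (M i j)).trans_lt (hM i)
  rw [inv_diagonal_of_ne_zero fun i => (hw i).ne', linfty_opNorm_def, ← NNReal.coe_one,
    NNReal.coe_lt_coe, Finset.sup_lt_iff one_pos]
  intro i _
  rw [← NNReal.coe_lt_coe]
  push_cast
  simp only [diagonal_mul, norm_mul, norm_inv, Real.norm_eq_abs, abs_of_pos (hw i),
    ← Finset.mul_sum]
  rw [inv_mul_lt_one₀ (hw i)]
  exact hM i

theorem hasSum_pow_mul_inv_of_diagonally_dominant {M : Matrix ι ι ℝ} {w : ι → ℝ}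
    (hM : ∀ i, ∑ j, |M i j| < w i) :
    HasSum (fun t : ℕ => ((diagonal w)⁻¹ * M) ^ t * (diagonal w)⁻¹) (diagonal w - M)⁻¹ := by
  have hw (i : ι) : w i ≠ 0 :=
    ((Finset.sum_nonneg fun j _ => abs_nonneg (M i j)).trans_lt (hM i)).ne'
  have hW : diagonal w * (diagonal w)⁻¹ = 1 := by
    rw [inv_diagonal_of_ne_zero hw, diagonal_mul_diagonal, ← diagonal_one]
    exact congrArg diagonal (funext fun i => mul_inv_cancel₀ (hw i))
  have hN := linfty_opNorm_inv_diagonal_mul_lt_one hM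
  have hfac : diagonal w - M = diagonal w * (1 - (diagonal w)⁻¹ * M) := by
    rw [mul_sub, mul_one, ← mul_assoc, hW, one_mul]
  rw [hfac, Matrix.mul_inv_rev, inv_eq_left_inv (geom_series_mul_neg _ hN)]
  exact (summable_geometric_of_norm_lt_one hN).hasSum.mul_right _

end Jacobi

theorem add_eq_pow_sub_and_sub_eq_pow_add {R : Type*} [Ring R] {P N : R} {X Y : ℕ → R}
    (hX0 : X 0 = 1) (hY0 : Y 0 = 0)
    (hX : ∀ t, X (t + 1) = X t * P - Y t * N) (hY : ∀ t, Y (t + 1) = Y t * P - X t * N) :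
    ∀ t, X t + Y t = (P - N) ^ t ∧ X t - Y t = (P + N) ^ t
  | 0 => by simp [hX0, hY0]
  | t + 1 => by
    obtain ⟨hsum, hdiff⟩ := add_eq_pow_sub_and_sub_eq_pow_add hX0 hY0 hX hY t
    rw [pow_succ, pow_succ, ← hsum, ← hdiff, hX, hY]
    constructor <;> noncomm_ring

theorem stmt_5_general (n : ℕ) (A : Matrix (Fin n) (Fin n) ℝ)
    (Apos Aneg D L : Matrix (Fin n) (Fin n) ℝ)
    (hApos : ∀ i j, Apos i j = max (A i j) 0)
    (hAneg : ∀ i j, Aneg i j = min (A i j) 0)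
    (hD : D = Matrix.diagonal fun i => ∑ j, |A i j|)
    (hL : L = D - A)
    (X Y : ℕ → Matrix (Fin n) (Fin n) ℝ)
    (hX0 : X 0 = 1) (hY0 : Y 0 = 0)
    (hXrec : ∀ t, X (t + 1) = X t * ((1 + D)⁻¹ * Apos) - Y t * ((1 + D)⁻¹ * Aneg))
    (hYrec : ∀ t, Y (t + 1) = Y t * ((1 + D)⁻¹ * Apos) - X t * ((1 + D)⁻¹ * Aneg))
    (p q : Fin n → Fin n → ℝ)
    (hp : ∀ i j, p i j = ((1 / 2 : ℝ) • ((1 + D - Apos + Aneg)⁻¹ + (1 + L)⁻¹)) i j)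
    (hq : ∀ i j, q i j = ((1 / 2 : ℝ) • ((1 + D - Apos + Aneg)⁻¹ - (1 + L)⁻¹)) i j) :
    (∀ i j, HasSum (fun t : ℕ => X t i j / (1 + D j j)) (p i j)) ∧
    (∀ i j, HasSum (fun t : ℕ => Y t i j / (1 + D j j)) (q i j)) ∧
    (∀ s : Fin n → ℝ, (∀ i, s i ∈ Set.Icc (-1 : ℝ) 1) →
      ∀ i, ((1 + L)⁻¹ *ᵥ s) i = ∑ j, (p i j - q i j) * s j) := by
  set w : Fin n → ℝ := fun i => 1 + ∑ j, |A i j|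
  have hW : 1 + D = diagonal w := by rw [hD, ← diagonal_one, diagonal_add]
  have hDw (j : Fin n) : 1 + D j j = w j := by simp [hD, w]
  have hApm : Apos + Aneg = A := by
    ext i j
    rw [Matrix.add_apply, hApos, hAneg, max_add_min, add_zero]
  have hAabs (i j : Fin n) : |(Apos - Aneg) i j| = |A i j| := by
    rw [Matrix.sub_apply, hApos, hAneg, max_sub_min_eq_abs', sub_zero, abs_abs]
  have hdom (M : Matrix (Fin n) (Fin n) ℝ) (hM : ∀ i j, |M i j| = |A i j|) (i : Fin n) :
      ∑ j, |M i j| < w i := by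
    simp only [hM, w, lt_add_iff_pos_left, zero_lt_one]
  have hpow := add_eq_pow_sub_and_sub_eq_pow_add hX0 hY0 hXrec hYrec
  simp only [← mul_sub, ← mul_add, hApm] at hpow
  have hS₁ : HasSum (fun t => X t * (1 + D)⁻¹ + Y t * (1 + D)⁻¹) (1 + D - Apos + Aneg)⁻¹ := by
    simp only [← add_mul, hpow]
    rw [sub_add, hW]
    exact hasSum_pow_mul_inv_of_diagonally_dominant (hdom _ hAabs)
  have hS₂ : HasSum (fun t => X t * (1 + D)⁻¹ - Y t * (1 + D)⁻¹) (1 + L)⁻¹ := by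
    simp only [← sub_mul, hpow]
    rw [hL, ← add_sub_assoc, hW]
    exact hasSum_pow_mul_inv_of_diagonally_dominant (hdom A fun _ _ => rfl)
  rw [hW] at hS₁ hS₂
  obtain ⟨hX, hY⟩ := hS₁.half_add_and_half_sub hS₂
  have hw (j : Fin n) : w j ≠ 0 := by positivity
  refine ⟨fun i j => ?_, fun i j => ?_, fun s _ i => ?_⟩
  · simpa only [hDw, hp, hW] using hX.mul_inv_diagonal_apply hw i j
  · simpa only [hDw, hq, hW] using hY.mul_inv_diagonal_apply hw i j
  · simp only [mulVec, dotProduct, hp, hq, Matrix.smul_apply, Matrix.add_apply,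
      Matrix.sub_apply, smul_eq_mul]
    congr 1 with j
    ring

theorem stmt_5 (n : ℕ) (hn : 1 ≤ n) (A : Matrix (Fin n) (Fin n) ℝ)
    (hAsymm : A.IsSymm) (hAdiag : ∀ i, A i i = 0)
    (hAval : ∀ i j, A i j = -1 ∨ A i j = 0 ∨ A i j = 1)
    (Apos Aneg D L : Matrix (Fin n) (Fin n) ℝ)
    (hApos : ∀ i j, Apos i j = max (A i j) 0)
    (hAneg : ∀ i j, Aneg i j = min (A i j) 0)
    (hD : D = Matrix.diagonal fun i => ∑ j, |A i j|)
    (hL : L = D - A)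
    (X Y : ℕ → Matrix (Fin n) (Fin n) ℝ)
    (hX0 : X 0 = 1) (hY0 : Y 0 = 0)
    (hXrec : ∀ t, X (t + 1) = X t * ((1 + D)⁻¹ * Apos) - Y t * ((1 + D)⁻¹ * Aneg))
    (hYrec : ∀ t, Y (t + 1) = Y t * ((1 + D)⁻¹ * Apos) - X t * ((1 + D)⁻¹ * Aneg))
    (p q : Fin n → Fin n → ℝ)
    (hp : ∀ i j, p i j = ((1 / 2 : ℝ) • ((1 + D - Apos + Aneg)⁻¹ + (1 + L)⁻¹)) i j)
    (hq : ∀ i j, q i j = ((1 / 2 : ℝ) • ((1 + D - Apos + Aneg)⁻¹ - (1 + L)⁻¹)) i j) :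
    (∀ i j, HasSum (fun t : ℕ => X t i j / (1 + D j j)) (p i j)) ∧
    (∀ i j, HasSum (fun t : ℕ => Y t i j / (1 + D j j)) (q i j)) ∧
    (∀ s : Fin n → ℝ, (∀ i, s i ∈ Set.Icc (-1 : ℝ) 1) →
      ∀ i, ((1 + L)⁻¹ *ᵥ s) i = ∑ j, (p i j - q i j) * s j) :=
  stmt_5_general n A Apos Aneg D L hApos hAneg hD hL X Y hX0 hY0 hXrec hYrec p q hp hq
end

section
/- Let z = (I + L)^{−1} s be the equilibrium opinion vector of the FJ model on a signed graph with internal opinion vector s ∈ [−1,1]^n, and define the internal conflict I(G,s) = Σ_i (z_i − s_i)², the disagreement D(G,s) = zᵀ L z, the disagreement with friends F(G,s) = zᵀ L⁺ z, the agreement with opponents E(G,s) = zᵀ L⁻ z, and the polarization P(G,s) = (1/n) Σ_i z_i². Then the conservation laws I(G,s) + 2·D(G,s) + n·P(G,s) = Σ_{i=1}^{n} s_i² and F(G,s) + E(G,s) = D(G,s) hold. -/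
/-!
The equilibrium satisfies `s = z + L z`, so `z - s = -L z` and the first law is the expansion
of `‖z + L z‖²`, using `z ⬝ᵥ L z = L z ⬝ᵥ z`. The equilibrium exists because `1 + L` is strictly
diagonally dominant. The second law is linearity in the Laplacian: entrywise
`max a 0 + |min a 0| = |a|` and `max a 0 + min a 0 = a`, so `L⁺ + L⁻ = L`.
-/

open Matrix

namespace Matrix

variable {ι : Type*} [Fintype ι] [DecidableEq ι]

def signedLaplacian (A : Matrix ι ι ℝ) : Matrix ι ι ℝ :=
  diagonal (fun i => ∑ j, |A i j|) - A

theorem signedLaplacian_apply (A : Matrix ι ι ℝ) (i j : ι) :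
    signedLaplacian A i j = (if i = j then ∑ k, |A i k| else 0) - A i j := by
  simp [signedLaplacian, diagonal_apply]

/-- `1 + L` is strictly diagonally dominant by rows, since `|A k k| ≥ A k k`. -/
theorem det_one_add_signedLaplacian_ne_zero (A : Matrix ι ι ℝ) :
    (1 + signedLaplacian A).det ≠ 0 := by
  refine det_ne_zero_of_sum_row_lt_diag fun k => ?_
  have h_off : ∑ j ∈ Finset.univ.erase k, ‖(1 + signedLaplacian A) k j‖
      = ∑ j, |A k j| - |A k k| := by
    rw [← Finset.sum_erase_eq_sub (Finset.mem_univ k)]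
    refine Finset.sum_congr rfl fun j hj => ?_
    simp [signedLaplacian_apply, Ne.symm (Finset.ne_of_mem_erase hj)]
  have h_diag : (1 + signedLaplacian A) k k = 1 + (∑ j, |A k j| - A k k) := by
    simp [signedLaplacian_apply]
  have h_sum : |A k k| ≤ ∑ j, |A k j| :=
    Finset.single_le_sum (f := fun j => |A k j|) (fun j _ => abs_nonneg _) (Finset.mem_univ k)
  have h_le : ∑ j, |A k j| - |A k k| ≤ ∑ j, |A k j| - A k k := by linarith [le_abs_self (A k k)]
  have h_pos : 0 < 1 + (∑ j, |A k j| - A k k) := by linarith [abs_nonneg (A k k)]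
  rw [h_off, h_diag, Real.norm_eq_abs, abs_of_pos h_pos]
  linarith

theorem signedLaplacian_map_max_add_map_min (A : Matrix ι ι ℝ) :
    signedLaplacian (A.map (max · 0)) + signedLaplacian (A.map (min · 0)) = signedLaplacian A := by
  have h_abs (a : ℝ) : |max a 0| + |min a 0| = |a| := by
    rcases le_total a 0 with h | h <;> simp [h, abs_of_nonneg, abs_of_nonpos]
  ext i j
  have h_sum : ∑ k, |max (A i k) 0| + ∑ k, |min (A i k) 0| = ∑ k, |A i k| := by
    rw [← Finset.sum_add_distrib]
    simp only [h_abs]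
  simp only [add_apply, signedLaplacian_apply, map_apply]
  split_ifs <;> linarith [max_add_min (A i j) 0]

theorem sum_sq_of_one_add_mulVec_eq {R : Type*} [CommRing R] (M : Matrix ι ι R)
    {s z : ι → R} (h : (1 + M) *ᵥ z = s) :
    ∑ i, (z i - s i) ^ 2 + 2 * (z ⬝ᵥ M *ᵥ z) + ∑ i, z i ^ 2 = ∑ i, s i ^ 2 := by
  subst h
  simp only [add_mulVec, one_mulVec, dotProduct, Finset.mul_sum, ← Finset.sum_add_distrib]
  exact Finset.sum_congr rfl fun i _ => by simp only [Pi.add_apply]; ring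

end Matrix

theorem stmt_7_general (n : ℕ) (hn : 1 ≤ n) (A : Matrix (Fin n) (Fin n) ℝ)
    (Apos Aneg D Dp Dm L Lp Lm : Matrix (Fin n) (Fin n) ℝ)
    (hApos : ∀ i j, Apos i j = max (A i j) 0)
    (hAneg : ∀ i j, Aneg i j = min (A i j) 0)
    (hD : D = Matrix.diagonal fun i => ∑ j, |A i j|)
    (hDp : Dp = Matrix.diagonal fun i => ∑ j, Apos i j)
    (hDm : Dm = Matrix.diagonal fun i => ∑ j, |Aneg i j|)
    (hL : L = D - A) (hLp : Lp = Dp - Apos) (hLm : Lm = Dm - Aneg)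
    (s : Fin n → ℝ)
    (z : Fin n → ℝ) (hz : z = (1 + L)⁻¹ *ᵥ s) :
    (∑ i, (z i - s i) ^ 2) + 2 * (z ⬝ᵥ L *ᵥ z) +
        (n : ℝ) * ((1 / (n : ℝ)) * ∑ i, z i ^ 2) = ∑ i, s i ^ 2 ∧
    z ⬝ᵥ Lp *ᵥ z + z ⬝ᵥ Lm *ᵥ z = z ⬝ᵥ L *ᵥ z := by
  have hL_eq : L = signedLaplacian A := by rw [hL, hD]; rfl
  have hLm_eq : Lm = signedLaplacian Aneg := by rw [hLm, hDm]; rfl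
  have hLp_eq : Lp = signedLaplacian Apos := by
    have h_nonneg (i j : Fin n) : |Apos i j| = Apos i j :=
      abs_of_nonneg (hApos i j ▸ le_max_right _ _)
    simp only [hLp, hDp, signedLaplacian, h_nonneg]
  have hs_eq : (1 + L) *ᵥ z = s := by
    have h_unit : IsUnit (1 + L).det := by
      rw [hL_eq, isUnit_iff_ne_zero]
      exact det_one_add_signedLaplacian_ne_zero A
    rw [hz, mulVec_mulVec, mul_nonsing_inv _ h_unit, one_mulVec]
  refine ⟨?_, ?_⟩
  · have hn_ne : (n : ℝ) ≠ 0 := Nat.cast_ne_zero.2 (by omega)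
    rw [← mul_assoc, mul_one_div_cancel hn_ne, one_mul]
    exact sum_sq_of_one_add_mulVec_eq L hs_eq
  · have hApos_eq : Apos = A.map (max · 0) := Matrix.ext hApos
    have hAneg_eq : Aneg = A.map (min · 0) := Matrix.ext hAneg
    rw [← dotProduct_add, ← add_mulVec, hLp_eq, hLm_eq, hL_eq, hApos_eq, hAneg_eq,
      signedLaplacian_map_max_add_map_min]

theorem stmt_7 (n : ℕ) (hn : 1 ≤ n) (A : Matrix (Fin n) (Fin n) ℝ)
    (hAsymm : A.IsSymm) (hAdiag : ∀ i, A i i = 0)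
    (hAval : ∀ i j, A i j = -1 ∨ A i j = 0 ∨ A i j = 1)
    (Apos Aneg D Dp Dm L Lp Lm : Matrix (Fin n) (Fin n) ℝ)
    (hApos : ∀ i j, Apos i j = max (A i j) 0)
    (hAneg : ∀ i j, Aneg i j = min (A i j) 0)
    (hD : D = Matrix.diagonal fun i => ∑ j, |A i j|)
    (hDp : Dp = Matrix.diagonal fun i => ∑ j, Apos i j)
    (hDm : Dm = Matrix.diagonal fun i => ∑ j, |Aneg i j|)
    (hL : L = D - A) (hLp : Lp = Dp - Apos) (hLm : Lm = Dm - Aneg)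
    (s : Fin n → ℝ) (hs : ∀ i, s i ∈ Set.Icc (-1 : ℝ) 1)
    (z : Fin n → ℝ) (hz : z = (1 + L)⁻¹ *ᵥ s) :
    (∑ i, (z i - s i) ^ 2) + 2 * (z ⬝ᵥ L *ᵥ z) +
        (n : ℝ) * ((1 / (n : ℝ)) * ∑ i, z i ^ 2) = ∑ i, s i ^ 2 ∧
    z ⬝ᵥ Lp *ᵥ z + z ⬝ᵥ Lm *ᵥ z = z ⬝ᵥ L *ᵥ z :=
  stmt_7_general n hn A Apos Aneg D Dp Dm L Lp Lm hApos hAneg hD hDp hDm hL hLp hLm s z hz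
end

section
/- For the FJ model on a signed graph with internal opinion vector s ∈ [−1,1]^n, the equilibrium opinion vector z = (I + L)^{−1} s can be expressed via the 2n × 2n matrix S as z = (1/2)·[I, −I]·S^{−1}·[I; −I]·s, i.e., z = (1/2)·(u − v) where (u; v) = S^{−1}(s; −s) with u, v ∈ ℝ^n. -/
/-!
Write `S = [[M, N], [N, M]]` with `M = I + D - A⁺` and `N = A⁻`. Then `M - N = I + L`, while
`M + N = I + D - |A|` is `I` plus the Laplacian of the underlying unsigned graph; both are
positive definite, so `det S = det (M + N) * det (M - N) ≠ 0`. If `(I + L) z = s`, then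
`S (z; -z) = ((M - N) z; -(M - N) z) = (s; -s)`, hence `S⁻¹ (s; -s) = (z; -z)` and
`z = (1/2) (z - (-z))`.
-/

open Matrix

namespace Matrix

section SignedLaplacian

variable {ι : Type*} [Fintype ι] [DecidableEq ι] {A : Matrix ι ι ℝ}

lemma dotProduct_diagonal_sum_abs_sub_mulVec (x : ι → ℝ) :
    x ⬝ᵥ ((diagonal (fun i => ∑ j, |A i j|) - A) *ᵥ x) =
      ∑ i, ∑ j, (|A i j| * x i ^ 2 - A i j * x i * x j) := by
  rw [sub_mulVec, dotProduct_sub]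
  simp only [dotProduct, mulVec_diagonal]
  simp only [mulVec, dotProduct, Finset.mul_sum, Finset.sum_mul, ← Finset.sum_sub_distrib]
  exact Finset.sum_congr rfl fun i _ => Finset.sum_congr rfl fun j _ => by ring

theorem posSemidef_diagonal_sum_abs_sub (hA : A.IsSymm) :
    (diagonal (fun i => ∑ j, |A i j|) - A).PosSemidef := by
  refine .of_dotProduct_mulVec_nonneg ?_ fun x => ?_
  · exact isHermitian_iff_isSymm.mpr ((isSymm_diagonal _).sub hA)
  rw [star_trivial, dotProduct_diagonal_sum_abs_sub_mulVec]
  have hsymm : 2 * ∑ i, ∑ j, (|A i j| * x i ^ 2 - A i j * x i * x j) =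
      ∑ i, ∑ j, (|A i j| * (x i ^ 2 + x j ^ 2) - 2 * (A i j * x i * x j)) := by
    rw [two_mul]
    nth_rewrite 2 [Finset.sum_comm]
    simp only [← Finset.sum_add_distrib, hA.apply]
    exact Finset.sum_congr rfl fun i _ => Finset.sum_congr rfl fun j _ => by ring
  have hterm : ∀ i j, 0 ≤ |A i j| * (x i ^ 2 + x j ^ 2) - 2 * (A i j * x i * x j) := by
    intro i j
    rcases abs_cases (A i j) with ⟨h, -⟩ | ⟨h, -⟩ <;> rw [h] <;>
      nlinarith [abs_nonneg (A i j), mul_nonneg (abs_nonneg (A i j)) (sq_nonneg (x i - x j)),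
        mul_nonneg (abs_nonneg (A i j)) (sq_nonneg (x i + x j))]
  have := Finset.sum_nonneg fun i (_ : i ∈ Finset.univ) =>
    Finset.sum_nonneg fun j (_ : j ∈ Finset.univ) => hterm i j
  linarith

theorem posDef_one_add_diagonal_sum_abs_sub (hA : A.IsSymm) :
    (1 + (diagonal (fun i => ∑ j, |A i j|) - A)).PosDef :=
  PosDef.one.add_posSemidef (posSemidef_diagonal_sum_abs_sub hA)

end SignedLaplacian

section BlockCirculant

variable {m R : Type*} [Fintype m]

theorem det_fromBlocks_eq_det_add_mul_det_sub [DecidableEq m] [CommRing R] (M N : Matrix m m R) :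
    (fromBlocks M N N M).det = (M + N).det * (M - N).det := by
  have h : fromBlocks (1 : Matrix m m R) 0 (-1) 1 * fromBlocks M N N M * fromBlocks 1 0 1 1 =
      fromBlocks (M + N) N 0 (M - N) := by
    simp only [fromBlocks_multiply]
    congr 1 <;> noncomm_ring
  have := congrArg det h
  rwa [det_mul, det_mul, det_fromBlocks_zero₁₂, det_fromBlocks_zero₁₂, det_fromBlocks_zero₂₁,
    det_one, one_mul, one_mul, mul_one] at this

theorem fromBlocks_mulVec_sum_elim_neg [Ring R] (M N : Matrix m m R) (z : m → R) :
    fromBlocks M N N M *ᵥ Sum.elim z (-z) = Sum.elim ((M - N) *ᵥ z) (-((M - N) *ᵥ z)) := by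
  rw [fromBlocks_mulVec, Sum.elim_comp_inl, Sum.elim_comp_inr, sub_mulVec, mulVec_neg, mulVec_neg]
  congr 1 <;> abel

theorem fromBlocks_inv_mulVec_sum_elim_neg [DecidableEq m] [CommRing R] {M N : Matrix m m R}
    (h : IsUnit (fromBlocks M N N M).det) (z : m → R) :
    (fromBlocks M N N M)⁻¹ *ᵥ Sum.elim ((M - N) *ᵥ z) (-((M - N) *ᵥ z)) = Sum.elim z (-z) := by
  rw [← fromBlocks_mulVec_sum_elim_neg, mulVec_mulVec, nonsing_inv_mul _ h, one_mulVec]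

end BlockCirculant

end Matrix

theorem stmt_10_general (n : ℕ) (A : Matrix (Fin n) (Fin n) ℝ)
    (hAsymm : A.IsSymm)
    (Apos Aneg D L : Matrix (Fin n) (Fin n) ℝ)
    (hApos : ∀ i j, Apos i j = max (A i j) 0)
    (hAneg : ∀ i j, Aneg i j = min (A i j) 0)
    (hD : D = Matrix.diagonal fun i => ∑ j, |A i j|)
    (hL : L = D - A)
    (S : Matrix (Fin n ⊕ Fin n) (Fin n ⊕ Fin n) ℝ)
    (hS : S = Matrix.fromBlocks (1 + D - Apos) Aneg Aneg (1 + D - Apos))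
    (s : Fin n → ℝ) :
    ∀ i, ((1 + L)⁻¹ *ᵥ s) i =
      (1 / 2) * ((S⁻¹ *ᵥ Sum.elim s (-s)) (Sum.inl i) -
        (S⁻¹ *ᵥ Sum.elim s (-s)) (Sum.inr i)) := by
  have hsplit : Apos + Aneg = A := by
    ext i j
    rw [Matrix.add_apply, hApos, hAneg, max_add_min, add_zero]
  have habs : Apos - Aneg = A.map abs := by
    ext i j
    rw [Matrix.sub_apply, hApos, hAneg, map_apply]
    rcases le_total (A i j) 0 with h | h <;> simp [h, abs_of_nonpos, abs_of_nonneg]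
  have hsub : 1 + D - Apos - Aneg = 1 + L := by
    rw [hL, ← hsplit]
    abel
  have hadd : 1 + D - Apos + Aneg =
      1 + (diagonal (fun i => ∑ j, |A.map abs i j|) - A.map abs) := by
    simp only [← habs, hD, map_apply, abs_abs]
    abel
  have hL_pd : (1 + L).PosDef := hL ▸ hD ▸ posDef_one_add_diagonal_sum_abs_sub hAsymm
  have hS_det : IsUnit S.det := by
    rw [hS, det_fromBlocks_eq_det_add_mul_det_sub, hadd, hsub]
    exact (mul_pos (posDef_one_add_diagonal_sum_abs_sub (hAsymm.map _)).det_pos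
      hL_pd.det_pos).ne'.isUnit
  set z := (1 + L)⁻¹ *ᵥ s
  have hz : (1 + D - Apos - Aneg) *ᵥ z = s := by
    rw [hsub, mulVec_mulVec, mul_nonsing_inv _ hL_pd.det_pos.ne'.isUnit, one_mulVec]
  have hsolve : S⁻¹ *ᵥ Sum.elim s (-s) = Sum.elim z (-z) := by
    rw [← hz, hS]
    exact fromBlocks_inv_mulVec_sum_elim_neg (hS ▸ hS_det) z
  intro i
  rw [hsolve, Sum.elim_inl, Sum.elim_inr, Pi.neg_apply]
  ring

theorem stmt_10 (n : ℕ) (hn : 1 ≤ n) (A : Matrix (Fin n) (Fin n) ℝ)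
    (hAsymm : A.IsSymm) (hAdiag : ∀ i, A i i = 0)
    (hAval : ∀ i j, A i j = -1 ∨ A i j = 0 ∨ A i j = 1)
    (Apos Aneg D L : Matrix (Fin n) (Fin n) ℝ)
    (hApos : ∀ i j, Apos i j = max (A i j) 0)
    (hAneg : ∀ i j, Aneg i j = min (A i j) 0)
    (hD : D = Matrix.diagonal fun i => ∑ j, |A i j|)
    (hL : L = D - A)
    (S : Matrix (Fin n ⊕ Fin n) (Fin n ⊕ Fin n) ℝ)
    (hS : S = Matrix.fromBlocks (1 + D - Apos) Aneg Aneg (1 + D - Apos))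
    (s : Fin n → ℝ) (hs : ∀ i, s i ∈ Set.Icc (-1 : ℝ) 1) :
    ∀ i, ((1 + L)⁻¹ *ᵥ s) i =
      (1 / 2) * ((S⁻¹ *ᵥ Sum.elim s (-s)) (Sum.inl i) -
        (S⁻¹ *ᵥ Sum.elim s (-s)) (Sum.inr i)) :=
  stmt_10_general n A hAsymm Apos Aneg D L hApos hAneg hD hL S hS s
end

section
/- Let h = (I + L)^{−1}·𝟙 (the structure centrality vector), let g(y) = hᵀy = 𝟙ᵀ(I + L)^{−1}y denote the overall equilibrium opinion for initial opinion vector y, let s ∈ [−1,1]^n, and let 1 ≤ k ≤ n. For each i define c_i = |h_i| − h_i·s_i (which is nonnegative). Then the maximum of g(y) over all y ∈ [−1,1]^n that differ from s in at most k coordinates (i.e., ‖y − s‖₀ ≤ k) equals g(s) + max{ Σ_{i∈T} c_i : T ⊆ {1,…,n}, |T| ≤ k }; in particular, the optimum is attained by a vector y that agrees with s outside a set T of at most k indices and satisfies y_i = |h_i|/h_i for i ∈ T with h_i ≠ 0. -/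
open Matrix

theorem stmt_19 (n : ℕ) (hn : 1 ≤ n) (A : Matrix (Fin n) (Fin n) ℝ)
    (hAsymm : A.IsSymm) (hAdiag : ∀ i, A i i = 0)
    (hAval : ∀ i j, A i j = -1 ∨ A i j = 0 ∨ A i j = 1)
    (D L : Matrix (Fin n) (Fin n) ℝ)
    (hD : D = Matrix.diagonal fun i => ∑ j, |A i j|)
    (hL : L = D - A)
    (h : Fin n → ℝ) (hh : h = (1 + L)⁻¹ *ᵥ (fun _ => 1))
    (g : (Fin n → ℝ) → ℝ)
    (hg : ∀ y, g y = (fun _ => (1 : ℝ)) ⬝ᵥ ((1 + L)⁻¹ *ᵥ y))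
    (s : Fin n → ℝ) (hs : ∀ i, s i ∈ Set.Icc (-1 : ℝ) 1)
    (k : ℕ) (hk : 1 ≤ k) (hkn : k ≤ n)
    (c : Fin n → ℝ) (hc : ∀ i, c i = |h i| - h i * s i) :
    (∀ i, 0 ≤ c i) ∧
    ∃ T : Finset (Fin n), T.card ≤ k ∧
      (∀ T' : Finset (Fin n), T'.card ≤ k → ∑ i ∈ T', c i ≤ ∑ i ∈ T, c i) ∧
      ∃ y : Fin n → ℝ, (∀ i, y i ∈ Set.Icc (-1 : ℝ) 1) ∧
        (∀ i, i ∉ T → y i = s i) ∧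
        (∀ i ∈ T, h i ≠ 0 → y i = |h i| / h i) ∧
        g y = g s + ∑ i ∈ T, c i ∧
        ∀ y' : Fin n → ℝ, (∀ i, y' i ∈ Set.Icc (-1 : ℝ) 1) →
          (Finset.univ.filter fun i => y' i ≠ s i).card ≤ k → g y' ≤ g y := by
  -- M := 1 + L is symmetric
  have hMsymm : (1 + L)ᵀ = 1 + L := by
    rw [Matrix.transpose_add, Matrix.transpose_one, hL, Matrix.transpose_sub, hD,
      Matrix.diagonal_transpose, hAsymm.eq]
  have hMinvsymm : ((1 + L)⁻¹)ᵀ = (1 + L)⁻¹ := by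
    rw [Matrix.transpose_nonsing_inv, hMsymm]
  -- g y = ∑ i, h i * y i
  have hgh : ∀ y, g y = ∑ i, h i * y i := by
    intro y
    rw [hg, Matrix.dotProduct_mulVec, hh]
    have : (fun _ => (1:ℝ)) ᵥ* (1 + L)⁻¹ = (1 + L)⁻¹ *ᵥ (fun _ => 1) := by
      rw [← hMinvsymm, Matrix.vecMul_transpose, hMinvsymm]
    rw [this]
    rfl
  -- c is nonneg
  have hc0 : ∀ i, 0 ≤ c i := by
    intro i
    rw [hc]
    have h1 : h i * s i ≤ |h i| := by
      calc h i * s i ≤ |h i * s i| := le_abs_self _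
        _ = |h i| * |s i| := abs_mul _ _
        _ ≤ |h i| * 1 := by
            apply mul_le_mul_of_nonneg_left _ (abs_nonneg _)
            exact abs_le.mpr ⟨(hs i).1, (hs i).2⟩
        _ = |h i| := mul_one _
    linarith
  refine ⟨hc0, ?_⟩
  -- choose optimal T
  obtain ⟨T, hTmem, hTmax⟩ := Finset.exists_max_image
    (Finset.univ.powerset.filter fun t => t.card ≤ k) (fun t => ∑ i ∈ t, c i)
    ⟨∅, by simp⟩
  have hTcard : T.card ≤ k := (Finset.mem_filter.mp hTmem).2
  have hTmax' : ∀ T' : Finset (Fin n), T'.card ≤ k → ∑ i ∈ T', c i ≤ ∑ i ∈ T, c i := by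
    intro T' hT'
    exact hTmax T' (Finset.mem_filter.mpr ⟨Finset.mem_powerset.mpr (Finset.subset_univ _), hT'⟩)
  refine ⟨T, hTcard, hTmax', ?_⟩
  set y : Fin n → ℝ := fun i => if i ∈ T then (if h i = 0 then s i else |h i| / h i) else s i
    with hy
  have hyIcc : ∀ i, y i ∈ Set.Icc (-1 : ℝ) 1 := by
    intro i
    simp only [hy]
    split_ifs with h1 h2
    · exact hs i
    · have : |h i| / h i = 1 ∨ |h i| / h i = -1 := by
        rcases abs_choice (h i) with hab | hab
        · left; rw [hab]; field_simp
        · right; rw [hab]; field_simp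
      rcases this with h3 | h3 <;> rw [h3] <;> constructor <;> norm_num
    · exact hs i
  have hterm : ∀ i ∈ T, h i * (y i - s i) = c i := by
    intro i hi
    simp only [hy, if_pos hi]
    by_cases h0 : h i = 0
    · simp [h0, hc i]
    · rw [if_neg h0, hc i]
      field_simp
  have hgdiff : ∀ z : Fin n → ℝ, g z - g s = ∑ i, h i * (z i - s i) := by
    intro z
    rw [hgh, hgh, ← Finset.sum_sub_distrib]
    congr 1; ext i; ring
  have hgy : g y = g s + ∑ i ∈ T, c i := by
    have : g y - g s = ∑ i ∈ T, c i := by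
      rw [hgdiff]
      rw [← Finset.sum_subset (Finset.subset_univ T)
        (fun i _ hi => by simp [hy, if_neg hi])]
      exact Finset.sum_congr rfl hterm
    linarith
  refine ⟨y, hyIcc, fun i hi => by simp [hy, if_neg hi], fun i hi h0 => by simp [hy, if_pos hi, if_neg h0], hgy, ?_⟩
  intro y' hy' hcard
  set U := Finset.univ.filter fun i => y' i ≠ s i with hU
  have hstep : g y' - g s ≤ ∑ i ∈ U, c i := by
    rw [hgdiff]
    have hUsum : ∑ i, h i * (y' i - s i) = ∑ i ∈ U, h i * (y' i - s i) := by
      refine (Finset.sum_subset (Finset.filter_subset _ _) ?_).symm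
      intro i _ hi
      simp only [hU, Finset.mem_filter, Finset.mem_univ, true_and, not_not] at hi
      simp [hi]
    rw [hUsum]
    apply Finset.sum_le_sum
    intro i _
    rw [hc]
    have h1 : h i * y' i ≤ |h i| := by
      calc h i * y' i ≤ |h i * y' i| := le_abs_self _
        _ = |h i| * |y' i| := abs_mul _ _
        _ ≤ |h i| * 1 := by
            apply mul_le_mul_of_nonneg_left _ (abs_nonneg _)
            exact abs_le.mpr ⟨(hy' i).1, (hy' i).2⟩
        _ = |h i| := mul_one _
    nlinarith [h1]
  have := hTmax' U hcard
  linarith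
end
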